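/- arXiv:0903.2899 — 4 statements merged into one kernel-verified Lean document; each statement's English description precedes it below -/
import Mathlib

section
/- For any quaternion ι with ι² = -1, one has i·((i - ι i ι)/2) + j·((j - ι j ι)/2) + k·((k - ι k ι)/2) = -1, where i, j, k are the standard quaternion units. -/
/-! Expanding the products, the sum is `(∑ e * e - (∑ e * ι * e) * ι) / 2` with `e` running over
`i, j, k`. Each unit squares to `-1`, and since each unit anticommutes with the other two,
`∑ e * q * e = q - 4 * re q`. A square root of `-1` is purely imaginary, so
`∑ e * ι * e * ι = ι ^ 2 = -1` and the sum is `(-3 + 1) / 2 = -1`. -/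

noncomputable section
open Quaternion

/-- The standard quaternion units. -/
def qi : ℍ[ℝ] := ⟨0, 1, 0, 0⟩
def qj : ℍ[ℝ] := ⟨0, 0, 1, 0⟩
def qk : ℍ[ℝ] := ⟨0, 0, 0, 1⟩

instance Quaternion.instCharZero {R : Type*} [Field R] [CharZero R] : CharZero ℍ[R] :=
  charZero_of_injective_algebraMap (algebraMap R ℍ[R]).injective

theorem Quaternion.re_eq_zero_of_sq_eq_neg_one {R : Type*} [CommRing R] [LinearOrder R]
    [IsStrictOrderedRing R] {a : ℍ[R]} (ha : a ^ 2 = -1) : a.re = 0 := by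
  rw [sq, Quaternion.ext_iff] at ha
  simp only [re_mul, imI_mul, imJ_mul, imK_mul, re_neg, imI_neg, imJ_neg, imK_neg, re_one,
    imI_one, imJ_one, imK_one] at ha
  obtain ⟨hre, hi, hj, hk⟩ := ha
  have h : a.re * (a.re ^ 2 + 1) * 2 = 0 := by
    linear_combination 2 * a.re * hre + a.imI * hi + a.imJ * hj + a.imK * hk
  have : a.re ^ 2 + 1 ≠ 0 := by positivity
  simpa [this] using h

theorem qi_mul_qi : qi * qi = -1 := by
  apply Quaternion.ext <;>
    simp only [re_mul, imI_mul, imJ_mul, imK_mul, re_neg, imI_neg, imJ_neg, imK_neg, re_one,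
      imI_one, imJ_one, imK_one] <;>
    simp [qi]

theorem qj_mul_qj : qj * qj = -1 := by
  apply Quaternion.ext <;>
    simp only [re_mul, imI_mul, imJ_mul, imK_mul, re_neg, imI_neg, imJ_neg, imK_neg, re_one,
      imI_one, imJ_one, imK_one] <;>
    simp [qj]

theorem qk_mul_qk : qk * qk = -1 := by
  apply Quaternion.ext <;>
    simp only [re_mul, imI_mul, imJ_mul, imK_mul, re_neg, imI_neg, imJ_neg, imK_neg, re_one,
      imI_one, imJ_one, imK_one] <;>
    simp [qk]

theorem sum_unit_mul_mul_unit (q : ℍ[ℝ]) :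
    qi * q * qi + qj * q * qj + qk * q * qk = q - ↑(4 * q.re) := by
  apply Quaternion.ext <;>
    simp only [re_add, imI_add, imJ_add, imK_add, re_sub, imI_sub, imJ_sub, imK_sub, re_mul,
      imI_mul, imJ_mul, imK_mul, re_coe, imI_coe, imJ_coe, imK_coe] <;>
    simp [qi, qj, qk]
  ring

theorem stmt_0 (ι : ℍ[ℝ]) (hι : ι ^ 2 = -1) :
    qi * ((qi - ι * qi * ι) / 2) + qj * ((qj - ι * qj * ι) / 2)
      + qk * ((qk - ι * qk * ι) / 2) = -1 := by
  have hconj : qi * ι * qi + qj * ι * qj + qk * ι * qk = ι := by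
    simp [sum_unit_mul_mul_unit, re_eq_zero_of_sq_eq_neg_one hι]
  calc _ = (qi * qi + qj * qj + qk * qk - (qi * ι * qi + qj * ι * qj + qk * ι * qk) * ι) / 2 := by
        simp only [div_eq_mul_inv]; noncomm_ring
    _ = (-3 - ι ^ 2) / 2 := by rw [qi_mul_qi, qj_mul_qj, qk_mul_qk, hconj, sq]; norm_num
    _ = -1 := by rw [hι]; norm_num
end
end

section
/- Suppose f : ℍ → ℍ is ℝ-differentiable at a non-real point q with ι = Im(q)/|Im(q)|, and f satisfies ∂f/∂x = ((i - ι i ι)/2) ∂f/∂t - ((i + ι i ι)/4) Df, and the analogous equations for y (with j) and z (with k), where Df = ∂f/∂t + i ∂f/∂x + j ∂f/∂y + k ∂f/∂z. Then for every h ∈ ℍ, the Fréchet derivative satisfies M_f h = h∥ · (∂f/∂t) + h⊥ · (-½ Df), where h∥ = (h - ι h ι)/2 and h⊥ = (h + ι h ι)/2. -/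
/-!
Both sides are `ℝ`-linear in `h`, so it suffices to compare them on `1, i, j, k`. Since `ι² = -1`,
`1∥ = 1` and `1⊥ = 0`, which gives `∂f/∂t`; on `i, j, k` the agreement is exactly the three
hypotheses, once `h⊥ · (-½ Df) = -(h + ι h ι)/4 · Df` is noted.
-/

noncomputable section
open Quaternion Filter Topology

theorem div_two_mul_div_two {D : Type*} [DivisionRing D] (x y : D) :
    x / 2 * (y / 2) = x / 4 * y := by
  rw [div_eq_mul_inv, div_eq_mul_inv, div_eq_mul_inv, mul_assoc, mul_assoc, ← mul_assoc _ y,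
    (Commute.ofNat_left 2 y).inv_left₀.eq, (Commute.ofNat_left 4 y).inv_left₀.eq, mul_assoc y,
    ← mul_inv_rev]
  norm_num

namespace Quaternion

instance instCharZero_s14 {R : Type*} [CommRing R] [CharZero R] : CharZero ℍ[R] :=
  charZero_of_injective_algebraMap coe_injective

theorem eq_re_add_imI_add_imJ_add_imK (h : ℍ[ℝ]) :
    h = h.re • 1 + h.imI • qi + h.imJ • qj + h.imK • qk := by
  ext <;> simp <;> simp [qi, qj, qk]

theorem linearMap_ext {M : Type*} [AddCommGroup M] [Module ℝ M]
    {f g : ℍ[ℝ] →ₗ[ℝ] M} (h1 : f 1 = g 1) (hi : f qi = g qi) (hj : f qj = g qj)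
    (hk : f qk = g qk) : f = g := by
  ext h
  rw [h.eq_re_add_imI_add_imJ_add_imK]
  simp only [map_add, map_smul, h1, hi, hj, hk]

theorem normalized_im_mul_self {v : ℍ[ℝ]} (hv : v.im ≠ 0) :
    (‖v.im‖⁻¹ • v.im) * (‖v.im‖⁻¹ • v.im) = -1 := by
  rw [smul_mul_smul_comm, ← sq (v.im), im_sq, normSq_eq_norm_mul_self, smul_neg, smul_coe,
    ← mul_inv, inv_mul_cancel₀ (by simpa using hv), coe_one]

/-- `h ↦ h∥ a + h⊥ b` in the notation of the paper. -/
def parallelPerpMul (ι a b : ℍ[ℝ]) : ℍ[ℝ] →ₗ[ℝ] ℍ[ℝ] where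
  toFun h := (h - ι * h * ι) / 2 * a + (h + ι * h * ι) / 2 * b
  map_add' h h' := by
    simp only [mul_add, add_mul, sub_mul, add_div, sub_div]
    abel
  map_smul' r h := by
    simp only [mul_smul_comm, smul_mul_assoc]
    rw [← smul_sub, ← smul_add, smul_div_assoc, smul_div_assoc, smul_mul_assoc, smul_mul_assoc,
      RingHom.id_apply, smul_add]

theorem parallelPerpMul_one {ι : ℍ[ℝ]} (hι : ι * ι = -1) (a b : ℍ[ℝ]) :
    parallelPerpMul ι a b 1 = a := by
  simp [parallelPerpMul, hι, one_add_one_eq_two]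

theorem parallelPerpMul_neg_half_apply (ι a D h : ℍ[ℝ]) :
    parallelPerpMul ι a (-(D / 2)) h = (h - ι * h * ι) / 2 * a - (h + ι * h * ι) / 4 * D := by
  simp [parallelPerpMul, div_two_mul_div_two, sub_eq_add_neg]

end Quaternion

theorem stmt_14_general (f : ℍ[ℝ] → ℍ[ℝ]) (q : ℍ[ℝ]) (hq : q.im ≠ 0)
    (ι : ℍ[ℝ]) (hι : ι = ((‖q.im‖)⁻¹ : ℝ) • q.im)
    (pdt pdx pdy pdz Df : ℍ[ℝ])
    (hpdt : pdt = fderiv ℝ f q 1) (hpdx : pdx = fderiv ℝ f q qi)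
    (hpdy : pdy = fderiv ℝ f q qj) (hpdz : pdz = fderiv ℝ f q qk)
    (hx : pdx = ((qi - ι * qi * ι) / 2) * pdt - ((qi + ι * qi * ι) / 4) * Df)
    (hy : pdy = ((qj - ι * qj * ι) / 2) * pdt - ((qj + ι * qj * ι) / 4) * Df)
    (hz : pdz = ((qk - ι * qk * ι) / 2) * pdt - ((qk + ι * qk * ι) / 4) * Df) :
    ∀ h : ℍ[ℝ], fderiv ℝ f q h
      = ((h - ι * h * ι) / 2) * pdt + ((h + ι * h * ι) / 2) * (-(Df / 2)) := by
  have hιι : ι * ι = -1 := hι ▸ normalized_im_mul_self hq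
  have hfderiv : (fderiv ℝ f q : ℍ[ℝ] →ₗ[ℝ] ℍ[ℝ]) = parallelPerpMul ι pdt (-(Df / 2)) :=
    linearMap_ext
      (by simp [parallelPerpMul_one hιι, hpdt])
      (by simp [parallelPerpMul_neg_half_apply, ← hpdx, hx])
      (by simp [parallelPerpMul_neg_half_apply, ← hpdy, hy])
      (by simp [parallelPerpMul_neg_half_apply, ← hpdz, hz])
  exact LinearMap.congr_fun hfderiv

theorem stmt_14 (f : ℍ[ℝ] → ℍ[ℝ]) (q : ℍ[ℝ]) (hq : q.im ≠ 0)
    (hdiff : DifferentiableAt ℝ f q)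
    (ι : ℍ[ℝ]) (hι : ι = ((‖q.im‖)⁻¹ : ℝ) • q.im)
    (pdt pdx pdy pdz Df : ℍ[ℝ])
    (hpdt : pdt = fderiv ℝ f q 1) (hpdx : pdx = fderiv ℝ f q qi)
    (hpdy : pdy = fderiv ℝ f q qj) (hpdz : pdz = fderiv ℝ f q qk)
    (hDf : Df = pdt + qi * pdx + qj * pdy + qk * pdz)
    (hx : pdx = ((qi - ι * qi * ι) / 2) * pdt - ((qi + ι * qi * ι) / 4) * Df)
    (hy : pdy = ((qj - ι * qj * ι) / 2) * pdt - ((qj + ι * qj * ι) / 4) * Df)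
    (hz : pdz = ((qk - ι * qk * ι) / 2) * pdt - ((qk + ι * qk * ι) / 4) * Df) :
    ∀ h : ℍ[ℝ], fderiv ℝ f q h
      = ((h - ι * h * ι) / 2) * pdt + ((h + ι * h * ι) / 2) * (-(Df / 2)) :=
  stmt_14_general f q hq ι hι pdt pdx pdy pdz Df hpdt hpdx hpdy hpdz hx hy hz
end
end

section
/- If a quaternionic function f is S-derivable at a non-real point q (i.e., there exist B, C ∈ ℍ with lim_{h→0} h⁻¹(f(q+h) - f(q) - h∥B - h⊥C) = 0), then B = (∂f/∂t)(q). -/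
/-!
Restrict the limit to real increments `h = t`. Since `ι² = -1` and reals are central,
`ι t ι = -t`, so `t∥ = t` and `t⊥ = 0`: along the real axis the S-derivative condition says that
the difference quotient `t⁻¹ (f (q + t) - f q)` tends to `B`. For a real-differentiable `f` that
limit is the directional derivative `df_q(1) = ∂f/∂t (q)`.
-/

noncomputable section
open Quaternion Filter Topology

theorem HasFDerivAt.eq_of_tendsto_slope {𝕜 E F : Type*} [NontriviallyNormedField 𝕜]
    [NormedAddCommGroup E] [NormedSpace 𝕜 E] [NormedAddCommGroup F] [NormedSpace 𝕜 F]
    {f : E → F} {L : E →L[𝕜] F} {x v : E} {b : F} (hf : HasFDerivAt f L x)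
    (h : Tendsto (fun t : 𝕜 => t⁻¹ • (f (x + t • v) - f x)) (𝓝[≠] 0) (𝓝 b)) :
    L v = b := by
  refine tendsto_nhds_unique (hasDerivAt_iff_tendsto_slope.mp (hf.hasLineDerivAt v)) ?_
  exact h.congr fun t => by simp [slope_def_module]

namespace Quaternion

instance {R : Type*} [CommRing R] [CharZero R] : CharZero ℍ[R] :=
  charZero_of_injective_algebraMap (by rw [algebraMap_def]; exact coe_injective)

theorem coe_ne_zero {t : ℝ} (ht : t ≠ 0) : (t : ℍ[ℝ]) ≠ 0 :=
  fun h => ht (by simpa using congrArg QuaternionAlgebra.re h)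

theorem tendsto_coe_nhdsNE_zero : Tendsto (fun t : ℝ => (t : ℍ[ℝ])) (𝓝[≠] 0) (𝓝[≠] 0) := by
  simpa using continuous_coe.continuousWithinAt.tendsto_nhdsWithin (x := 0)
    (s := {0}ᶜ) (t := {0}ᶜ) fun _ => coe_ne_zero

theorem normalize_im_mul_self {q : ℍ[ℝ]} (hq : q.im ≠ 0) :
    (‖q.im‖⁻¹ • q.im) * (‖q.im‖⁻¹ • q.im) = -1 := by
  have him : ‖q.im‖⁻¹ • q.im = (‖q.im‖⁻¹ • q.im).im := by simp
  have hnorm : ‖‖q.im‖⁻¹ • q.im‖ = 1 := by simpa using norm_smul_inv_norm (𝕜 := ℝ) hq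
  rw [him, ← sq, im_sq, ← him, normSq_eq_norm_mul_self, hnorm, mul_one, coe_one]

theorem mul_coe_mul_of_mul_self_eq_neg_one {ι : ℍ[ℝ]} (hι : ι * ι = -1) (t : ℝ) :
    ι * t * ι = -t := by
  rw [mul_assoc, coe_commutes, ← mul_assoc, hι, neg_one_mul]

theorem tendsto_smul_slope_of_tendsto_inv_mul {g : ℝ → ℍ[ℝ]} {B : ℍ[ℝ]}
    (h : Tendsto (fun t : ℝ => (t : ℍ[ℝ])⁻¹ * (g t - t * B)) (𝓝[≠] 0) (𝓝 0)) :
    Tendsto (fun t : ℝ => t⁻¹ • g t) (𝓝[≠] 0) (𝓝 B) := by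
  refine (zero_add B ▸ h.add_const B).congr' ?_
  filter_upwards [self_mem_nhdsWithin] with t (ht : t ≠ 0)
  rw [mul_sub, inv_mul_cancel_left₀ (coe_ne_zero ht), sub_add_cancel, ← coe_inv,
    coe_mul_eq_smul]

end Quaternion

theorem stmt_15_general (f : ℍ[ℝ] → ℍ[ℝ]) (q : ℍ[ℝ]) (hq : q.im ≠ 0)
    (hdiff : DifferentiableAt ℝ f q)
    (ι : ℍ[ℝ]) (hι : ι = ((‖q.im‖)⁻¹ : ℝ) • q.im)
    (B C : ℍ[ℝ])
    (hS : Tendsto (fun h : ℍ[ℝ] =>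
        h⁻¹ * (f (q + h) - f q - ((h - ι * h * ι) / 2) * B - ((h + ι * h * ι) / 2) * C))
      (𝓝[≠] 0) (𝓝 0)) :
    B = fderiv ℝ f q 1 := by
  have hreal := mul_coe_mul_of_mul_self_eq_neg_one (hι ▸ normalize_im_mul_self hq)
  have hS_real : Tendsto (fun t : ℝ => (t : ℍ[ℝ])⁻¹ * (f (q + t • 1) - f q - t * B))
      (𝓝[≠] 0) (𝓝 0) :=
    (hS.comp tendsto_coe_nhdsNE_zero).congr fun t => by simp [hreal, ← coe_mul_eq_smul]
  exact (hdiff.hasFDerivAt.eq_of_tendsto_slope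
    (tendsto_smul_slope_of_tendsto_inv_mul hS_real)).symm

theorem stmt_15 (f : ℍ[ℝ] → ℍ[ℝ]) (q : ℍ[ℝ]) (hq : q.im ≠ 0)
    (hcont : ContinuousAt f q) (hdiff : DifferentiableAt ℝ f q)
    (ι : ℍ[ℝ]) (hι : ι = ((‖q.im‖)⁻¹ : ℝ) • q.im)
    (B C : ℍ[ℝ])
    (hS : Tendsto (fun h : ℍ[ℝ] =>
        h⁻¹ * (f (q + h) - f q - ((h - ι * h * ι) / 2) * B - ((h + ι * h * ι) / 2) * C))
      (𝓝[≠] 0) (𝓝 0)) :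
    B = fderiv ℝ f q 1 :=
  stmt_15_general f q hq hdiff ι hι B C hS
end
end

section
/- If f is S-derivable at a non-real point q with parallel derivative B = ∂f/∂t and perpendicular derivative C, then C = -½ Df(q), where Df = ∂f/∂t + i ∂f/∂x + j ∂f/∂y + k ∂f/∂z is the left Fueter operator. -/
/-!
S-derivability at `q` says that `f (q + h) - f q = h∥ B + h⊥ C + o(h)`, and `h ↦ h∥ B + h⊥ C`
is real-linear, so it is the real differential of `f` at `q`. Evaluating it on `i, j, k` and
summing `e (e ∓ ι e ι) / 2` over `e ∈ {i, j, k}` with the identity `Σ e v e = -(v + 2 v̄)` and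
`ι² = -1` gives `Df(q) = B + Σ e ∂f/∂e = B - B - 2C = -2C`.
-/

noncomputable section
open Quaternion Filter Topology

theorem hasFDerivAt_of_tendsto_inv_mul {A : Type*} [NormedDivisionRing A] [NormedAlgebra ℝ A]
    {f : A → A} {L : A →L[ℝ] A} {x : A}
    (hf : Tendsto (fun h => h⁻¹ * (f (x + h) - f x - L h)) (𝓝[≠] 0) (𝓝 0)) :
    HasFDerivAt f L x := by
  rw [hasFDerivAt_iff_isLittleO_nhds_zero, ← Asymptotics.isLittleO_norm_norm]
  refine Asymptotics.isLittleO_of_tendsto (fun h hh => by simp [norm_eq_zero.mp hh]) ?_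
  have hcont : ContinuousAt (fun h => ‖f (x + h) - f x - L h‖ / ‖h‖) 0 :=
    continuousWithinAt_compl_self.mp <| by
      simpa [ContinuousWithinAt, norm_mul, div_eq_inv_mul] using hf.norm
  simpa using hcont.tendsto

namespace Quaternion

instance : CharZero ℍ[ℝ] :=
  charZero_of_injective_algebraMap (algebraMap ℝ ℍ[ℝ]).injective

theorem star_smul_im (r : ℝ) (q : ℍ[ℝ]) : star (r • q.im) = -(r • q.im) := by
  rw [star_smul, star_im, smul_neg]

theorem mul_self_eq_neg_one {u : ℍ[ℝ]} (hstar : star u = -u) (hu : ‖u‖ = 1) :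
    u * u = -1 :=
  calc u * u = -(star u * u) := by rw [hstar, neg_mul, neg_neg]
    _ = -1 := by rw [star_mul_self, normSq_eq_norm_mul_self, hu]; simp

theorem basis_mul_mul_basis_sum (v : ℍ[ℝ]) :
    qi * v * qi + qj * v * qj + qk * v * qk = -(v + star v + star v) := by
  ext <;>
    simp only [re_mul, imI_mul, imJ_mul, imK_mul, re_add, imI_add, imJ_add, imK_add,
      re_neg, imI_neg, imJ_neg, imK_neg, re_star, imI_star, imJ_star, imK_star] <;>
    simp only [qi, qj, qk] <;>
    ring

end Quaternion

def sDifferential (ι B C : ℍ[ℝ]) : ℍ[ℝ] →L[ℝ] ℍ[ℝ] :=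
  LinearMap.toContinuousLinearMap
    { toFun := fun h => ((h - ι * h * ι) / 2) * B + ((h + ι * h * ι) / 2) * C
      map_add' := fun x y => by simp only [mul_add, add_mul, sub_mul, add_div, sub_div]; abel
      map_smul' := fun t x => by
        rw [RingHom.id_apply, smul_add]
        simp only [mul_smul_comm, smul_mul_assoc, ← smul_sub, ← smul_add, smul_div_assoc] }

theorem sDifferential_apply (ι B C h : ℍ[ℝ]) :
    sDifferential ι B C h = ((h - ι * h * ι) / 2) * B + ((h + ι * h * ι) / 2) * C :=
  rfl

theorem eq_neg_half_fueter_sDifferential {ι : ℍ[ℝ]} (hstar : star ι = -ι) (hsq : ι * ι = -1)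
    (B C : ℍ[ℝ]) :
    C = -((B + qi * sDifferential ι B C qi + qj * sDifferential ι B C qj
      + qk * sDifferential ι B C qk) / 2) := by
  have hsum : qi * sDifferential ι B C qi + qj * sDifferential ι B C qj
      + qk * sDifferential ι B C qk
      = ((qi * 1 * qi + qj * 1 * qj + qk * 1 * qk)
            - (qi * ι * qi + qj * ι * qj + qk * ι * qk) * ι) / 2 * B
        + ((qi * 1 * qi + qj * 1 * qj + qk * 1 * qk)
            + (qi * ι * qi + qj * ι * qj + qk * ι * qk) * ι) / 2 * C := by
    simp only [sDifferential_apply, mul_add, mul_div_assoc', ← mul_assoc, mul_sub, add_div,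
      sub_div, add_mul, sub_mul, mul_one]
    abel
  have hfueter : B + qi * sDifferential ι B C qi + qj * sDifferential ι B C qj
      + qk * sDifferential ι B C qk = -(2 * C) := by
    rw [add_assoc, add_assoc, ← add_assoc (qi * _), hsum, basis_mul_mul_basis_sum,
      basis_mul_mul_basis_sum, hstar, star_one, add_neg_cancel, zero_add, neg_neg, hsq]
    norm_num
  rw [hfueter, (Commute.ofNat_left 2 C).eq, neg_div, mul_div_assoc]
  norm_num

theorem stmt_16_general (f : ℍ[ℝ] → ℍ[ℝ]) (q : ℍ[ℝ]) (hq : q.im ≠ 0)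
    (ι : ℍ[ℝ]) (hι : ι = ((‖q.im‖)⁻¹ : ℝ) • q.im)
    (C : ℍ[ℝ])
    (hS : Tendsto (fun h : ℍ[ℝ] =>
        h⁻¹ * (f (q + h) - f q - ((h - ι * h * ι) / 2) * fderiv ℝ f q 1
          - ((h + ι * h * ι) / 2) * C))
      (𝓝[≠] 0) (𝓝 0)) :
    C = -((fderiv ℝ f q 1 + qi * fderiv ℝ f q qi + qj * fderiv ℝ f q qj
        + qk * fderiv ℝ f q qk) / 2) := by
  have hstar : star ι = -ι := hι ▸ star_smul_im _ q
  have hsq : ι * ι = -1 := mul_self_eq_neg_one hstar (hι ▸ norm_smul_inv_norm hq)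
  generalize fderiv ℝ f q 1 = B at hS ⊢
  have hderiv : HasFDerivAt f (sDifferential ι B C) q :=
    hasFDerivAt_of_tendsto_inv_mul (by simpa only [sDifferential_apply, ← sub_sub] using hS)
  rw [hderiv.fderiv]
  exact eq_neg_half_fueter_sDifferential hstar hsq B C

theorem stmt_16 (f : ℍ[ℝ] → ℍ[ℝ]) (q : ℍ[ℝ]) (hq : q.im ≠ 0)
    (hdiff : ∀ᶠ p in 𝓝 q, DifferentiableAt ℝ f p)
    (hcont : ContinuousAt (fun p => fderiv ℝ f p) q)
    (ι : ℍ[ℝ]) (hι : ι = ((‖q.im‖)⁻¹ : ℝ) • q.im)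
    (C : ℍ[ℝ])
    (hS : Tendsto (fun h : ℍ[ℝ] =>
        h⁻¹ * (f (q + h) - f q - ((h - ι * h * ι) / 2) * fderiv ℝ f q 1
          - ((h + ι * h * ι) / 2) * C))
      (𝓝[≠] 0) (𝓝 0)) :
    C = -((fderiv ℝ f q 1 + qi * fderiv ℝ f q qi + qj * fderiv ℝ f q qj
        + qk * fderiv ℝ f q qk) / 2) :=
  stmt_16_general f q hq ι hι C hS
end
end
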